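/- If (α,β) ∈ (A ∪ B) \ {(2,1)} (with A, B as in the simplex-invariance condition), then U(x) = β(1-x) - αx/(1+x) + x has no periodic points of prime period 2 in [0,1]: every solution of U(U(x)) = x in [0,1] is a fixed point of U. -/

import Mathlib

/-!
If `y = U x` and `x = U y` with `x ≠ y`, clearing the denominators `1 + x`, `1 + y` and
subtracting the two equations leaves `(y - x) (2 + (1 - β) (x + y) - α) = 0`, so
`α = 2 + (1 - β) (x + y)`. On both parameter regions `α ≤ 2` and `β ≤ 1`, while `x + U x > 0`
on `[0, 1]`; hence the only way out is `β = 1`, `α = 2`.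
-/

open Real

noncomputable def U (α β t : ℝ) : ℝ := β * (1 - t) - α * t / (1 + t) + t

lemma one_add_two_mul_sqrt_mul_one_sub_le_two (β : ℝ) : 1 + 2 * √(β * (1 - β)) ≤ 2 := by
  have h : √(β * (1 - β)) ≤ 1 / 2 := by
    rw [sqrt_le_left (by norm_num)]
    nlinarith [sq_nonneg (β - 1 / 2)]
  linarith

section

variable {α β : ℝ}

lemma U_mul_one_add {t : ℝ} (ht : 1 + t ≠ 0) :
    U α β t * (1 + t) = β * (1 - t) * (1 + t) - α * t + t * (1 + t) := by
  unfold U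
  field_simp

lemma add_U_pos (hβ : 0 < β) (hα : α ≤ 2) {x : ℝ} (hx : x ∈ Set.Icc (0 : ℝ) 1) :
    0 < x + U α β x := by
  obtain ⟨hx0, hx1⟩ := hx
  have hU := U_mul_one_add (α := α) (β := β) (t := x) (by linarith)
  have hβx : 0 < β * (1 - x ^ 2) + 2 * x ^ 2 := by
    rcases hx0.eq_or_lt with rfl | hxpos
    · simpa using hβ
    · nlinarith [mul_nonneg hβ.le (by nlinarith : (0 : ℝ) ≤ 1 - x ^ 2)]
  have hprod : 0 < (x + U α β x) * (1 + x) := by nlinarith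
  exact pos_of_mul_pos_left hprod (by linarith)

lemma period_two_factorization {x y : ℝ} (hx : 1 + x ≠ 0) (hy : 1 + y ≠ 0)
    (hxy : U α β x = y) (hyx : U α β y = x) :
    (y - x) * (2 + (1 - β) * (x + y) - α) = 0 := by
  have ex := U_mul_one_add (α := α) (β := β) hx
  have ey := U_mul_one_add (α := α) (β := β) hy
  rw [hxy] at ex
  rw [hyx] at ey
  linear_combination ex - ey

theorem U_eq_self_of_U_U_eq_self (hβ : 0 < β) (hβ1 : β ≤ 1) (hα : α ≤ 2)
    (hne : (α, β) ≠ (2, 1)) {x : ℝ} (hx : x ∈ Set.Icc (0 : ℝ) 1)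
    (hUU : U α β (U α β x) = x) : U α β x = x := by
  by_contra hyx
  have hsum := add_U_pos hβ hα hx
  have hfactor := period_two_factorization (α := α) (β := β) (by linarith [hx.1])
    (by linarith [hx.2]) rfl hUU
  have hα_eq : α = 2 + (1 - β) * (x + U α β x) :=
    by linarith [(mul_eq_zero.mp hfactor).resolve_left (sub_ne_zero.mpr hyx)]
  rcases hβ1.lt_or_eq with hβlt | rfl
  · nlinarith [mul_pos (sub_pos.mpr hβlt) hsum]
  · obtain rfl : α = 2 := by linarith
    exact hne rfl

end

/-- If (α,β) ∈ (A ∪ B) \ {(2,1)} then U has no 2-periodic points in [0,1]: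
every solution of U(U(x)) = x in [0,1] is a fixed point of U. -/
theorem stmt_16 (α β : ℝ)
    (hAB : (0 < β ∧ β < 1 / 2 ∧ 0 < α ∧ α ≤ 1 + 2 * Real.sqrt (β * (1 - β))) ∨
           (1 / 2 ≤ β ∧ β ≤ 1 ∧ 0 < α ∧ α ≤ 2))
    (hne : (α, β) ≠ (2, 1)) :
    ∀ x ∈ Set.Icc (0 : ℝ) 1,
      (fun t : ℝ => β * (1 - t) - α * t / (1 + t) + t)
          ((fun t : ℝ => β * (1 - t) - α * t / (1 + t) + t) x) = x →
        β * (1 - x) - α * x / (1 + x) + x = x := by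
  intro x hx hUU
  obtain ⟨hβ, hβ1, hα⟩ : 0 < β ∧ β ≤ 1 ∧ α ≤ 2 := by
    rcases hAB with ⟨hβ, hβ1, -, hα⟩ | ⟨hβ, hβ1, -, hα⟩
    · exact ⟨hβ, by linarith, hα.trans (one_add_two_mul_sqrt_mul_one_sub_le_two β)⟩
    · exact ⟨by linarith, hβ1, hα⟩
  exact U_eq_self_of_U_U_eq_self hβ hβ1 hα hne hx hUU
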